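/- arXiv:2308.13237 — 6 statements merged into one kernel-verified Lean document; each statement's English description precedes it below -/
import Mathlib

section
/- For two points z₁, z₂ in the upper half-plane ℍ, the Lipschitz constant of the label-preserving affine map between the corresponding normalized unit-area triangles equals (|z₂ - conj(z₁)| + |z₂ - z₁|) / (2 · Im(z₁)^{1/2} · Im(z₂)^{1/2}). -/
/-!
The affine map is the ℝ-linear map `ζ ↦ α ζ + β ζ̄` with `α = c (z₂ - z̄₁) / (z₁ - z̄₁)`,
`β = c (z₁ - z₂) / (z₁ - z̄₁)` and `c = √(Im z₁ / Im z₂)`. By the triangle inequality such a map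
is `(|α| + |β|)`-Lipschitz, and the bound is attained at a unit vector `ζ` that makes `α ζ` and
`β ζ̄` point in the same direction. Since `|z₁ - z̄₁| = 2 Im z₁`, `|α| + |β|` is the claimed value.
-/

open Complex ComplexConjugate

namespace Complex

theorem norm_mul_add_mul_conj_le (α β ζ : ℂ) :
    ‖α * ζ + β * conj ζ‖ ≤ (‖α‖ + ‖β‖) * ‖ζ‖ :=
  calc ‖α * ζ + β * conj ζ‖ ≤ ‖α * ζ‖ + ‖β * conj ζ‖ := norm_add_le _ _
    _ = (‖α‖ + ‖β‖) * ‖ζ‖ := by rw [norm_mul, norm_mul, norm_conj, add_mul]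

/-- For `ζ = exp(i (arg β - arg α) / 2)`, both `α ζ` and `β ζ̄` have argument `(arg α + arg β) / 2`. -/
theorem exists_norm_eq_one_and_norm_mul_add_mul_conj_eq (α β : ℂ) :
    ∃ ζ : ℂ, ‖ζ‖ = 1 ∧ ‖α * ζ + β * conj ζ‖ = ‖α‖ + ‖β‖ := by
  set ζ := exp (((arg β - arg α) / 2 : ℝ) * I)
  set ω := exp (((arg α + arg β) / 2 : ℝ) * I)
  have hα : exp (arg α * I) * ζ = ω := by
    rw [← exp_add]; congr 1; push_cast; ring
  have hβ : exp (arg β * I) * conj ζ = ω := by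
    rw [← exp_conj, map_mul, conj_ofReal, conj_I, ← exp_add]; congr 1; push_cast; ring
  have hsum : α * ζ + β * conj ζ = ((‖α‖ + ‖β‖ : ℝ) : ℂ) * ω := by
    calc α * ζ + β * conj ζ
        = ‖α‖ * (exp (arg α * I) * ζ) + ‖β‖ * (exp (arg β * I) * conj ζ) := by
          rw [← mul_assoc, ← mul_assoc, norm_mul_exp_arg_mul_I, norm_mul_exp_arg_mul_I]
      _ = ((‖α‖ + ‖β‖ : ℝ) : ℂ) * ω := by rw [hα, hβ]; push_cast; ring
  refine ⟨ζ, norm_exp_ofReal_mul_I _, ?_⟩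
  rw [hsum, norm_mul, norm_exp_ofReal_mul_I, mul_one, norm_real, Real.norm_of_nonneg (by positivity)]

theorem dist_mul_add_mul_conj (α β ζ η : ℂ) :
    dist (α * ζ + β * conj ζ) (α * η + β * conj η) = ‖α * (ζ - η) + β * conj (ζ - η)‖ := by
  rw [dist_eq, map_sub]; ring_nf

theorem isLeast_lipschitz_mul_add_mul_conj (α β : ℂ) :
    IsLeast {K : ℝ | 0 ≤ K ∧ ∀ ζ η : ℂ,
      dist (α * ζ + β * conj ζ) (α * η + β * conj η) ≤ K * dist ζ η} (‖α‖ + ‖β‖) := by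
  refine ⟨⟨by positivity, fun ζ η => ?_⟩, fun K ⟨_, hK⟩ => ?_⟩
  · rw [dist_eq ζ η, dist_mul_add_mul_conj]
    exact norm_mul_add_mul_conj_le α β (ζ - η)
  · obtain ⟨ζ, hζ, hnorm⟩ := exists_norm_eq_one_and_norm_mul_add_mul_conj_eq α β
    simpa [dist_eq, hζ, hnorm] using hK ζ 0

theorem norm_sub_conj (z : ℂ) : ‖z - conj z‖ = 2 * |z.im| := by
  rw [sub_conj, norm_mul, norm_I, mul_one, norm_real, Real.norm_eq_abs, abs_mul, abs_two]

end Complex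

theorem lipschitz_constant_affine_map_general (z₁ z₂ : ℂ) (h₁ : 0 < z₁.im) :
    IsLeast {K : ℝ | 0 ≤ K ∧ ∀ ζ η : ℂ,
      dist ((Real.sqrt (z₁.im / z₂.im) : ℂ) *
          ((z₂ - (starRingEnd ℂ) z₁) / (z₁ - (starRingEnd ℂ) z₁) * ζ +
           (z₁ - z₂) / (z₁ - (starRingEnd ℂ) z₁) * (starRingEnd ℂ) ζ))
        ((Real.sqrt (z₁.im / z₂.im) : ℂ) *
          ((z₂ - (starRingEnd ℂ) z₁) / (z₁ - (starRingEnd ℂ) z₁) * η +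
           (z₁ - z₂) / (z₁ - (starRingEnd ℂ) z₁) * (starRingEnd ℂ) η))
        ≤ K * dist ζ η}
      ((‖z₂ - (starRingEnd ℂ) z₁‖ + ‖z₂ - z₁‖) /
        (2 * Real.sqrt z₁.im * Real.sqrt z₂.im)) := by
  set c : ℂ := (Real.sqrt (z₁.im / z₂.im) : ℂ)
  set A := (z₂ - conj z₁) / (z₁ - conj z₁)
  set B := (z₁ - z₂) / (z₁ - conj z₁)
  have hmap : ∀ ζ, c * (A * ζ + B * conj ζ) = c * A * ζ + c * B * conj ζ := fun ζ => by ring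
  have hnorm : ‖c * A‖ + ‖c * B‖ = (‖z₂ - conj z₁‖ + ‖z₂ - z₁‖) / (2 * √z₁.im * √z₂.im) := by
    have hc : ‖c‖ = √z₁.im / √z₂.im := by
      rw [norm_real, Real.norm_of_nonneg (Real.sqrt_nonneg _), Real.sqrt_div h₁.le]
    have hden : ‖z₁ - conj z₁‖ = √z₁.im * √z₁.im * 2 := by
      rw [norm_sub_conj, abs_of_pos h₁, Real.mul_self_sqrt h₁.le, mul_comm]
    have hs : √z₁.im ≠ 0 := (Real.sqrt_pos.2 h₁).ne'
    rw [norm_mul, norm_mul, norm_div, norm_div, hc, hden, norm_sub_rev z₁ z₂]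
    field_simp
  simpa only [hmap, hnorm] using isLeast_lipschitz_mul_add_mul_conj (c * A) (c * B)

/-- The Lipschitz constant of the label-preserving affine map between the normalized
unit-area triangles `T_{z₁}` and `T_{z₂}` equals
`(|z₂ - conj z₁| + |z₂ - z₁|) / (2 √(Im z₁) √(Im z₂))`. The Lipschitz constant is
formalized as the least `K ≥ 0` such that the map is `K`-Lipschitz. -/
theorem lipschitz_constant_affine_map (z₁ z₂ : ℂ) (h₁ : 0 < z₁.im) (h₂ : 0 < z₂.im) :
    IsLeast {K : ℝ | 0 ≤ K ∧ ∀ ζ η : ℂ,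
      dist ((Real.sqrt (z₁.im / z₂.im) : ℂ) *
          ((z₂ - (starRingEnd ℂ) z₁) / (z₁ - (starRingEnd ℂ) z₁) * ζ +
           (z₁ - z₂) / (z₁ - (starRingEnd ℂ) z₁) * (starRingEnd ℂ) ζ))
        ((Real.sqrt (z₁.im / z₂.im) : ℂ) *
          ((z₂ - (starRingEnd ℂ) z₁) / (z₁ - (starRingEnd ℂ) z₁) * η +
           (z₁ - z₂) / (z₁ - (starRingEnd ℂ) z₁) * (starRingEnd ℂ) η))
        ≤ K * dist ζ η}
      ((‖z₂ - (starRingEnd ℂ) z₁‖ + ‖z₂ - z₁‖) /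
        (2 * Real.sqrt z₁.im * Real.sqrt z₂.im)) :=
  lipschitz_constant_affine_map_general z₁ z₂ h₁
end

section
/- Let z ∈ ℍ parametrize a unit-area labelled triangle T_z with vertices (2/Im z)^{1/2}·z, 0, (2/Im z)^{1/2}. Then the angle of T_z at the b-vertex (at 0) equals the argument of z, and T_z is acute if and only if 0 < Re z < 1 and |z - 1/2| > 1/2. -/
open Complex EuclideanGeometry

/-!
Multiplication by a nonzero complex number preserves unoriented angles, so `T_z` is similar to
the triangle `z, 0, 1`. Its angle at `0` is `|arg z|`. An angle is acute iff the inner product of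
its legs is positive; for `z, 0, 1` these inner products are `Re z`, `1 - Re z` and
`|z|² - Re z`, and the last is positive iff `|z - 1/2| > 1/2`.
-/

theorem InnerProductGeometry.angle_lt_pi_div_two_iff_inner_pos {V : Type*}
    [NormedAddCommGroup V] [InnerProductSpace ℝ V] (x y : V) :
    InnerProductGeometry.angle x y < Real.pi / 2 ↔ 0 < inner ℝ x y := by
  rw [InnerProductGeometry.angle, Real.arccos_lt_pi_div_two]
  rcases eq_or_ne x 0 with rfl | hx
  · simp
  rcases eq_or_ne y 0 with rfl | hy
  · simp
  exact div_pos_iff_of_pos_right (by positivity)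

namespace Complex

theorem euclideanAngle_mul_left {a : ℂ} (ha : a ≠ 0) (p q r : ℂ) :
    ∠ (a * p) (a * q) (a * r) = ∠ p q r := by
  simp only [EuclideanGeometry.angle, vsub_eq_sub, ← mul_sub, angle_mul_left ha]

theorem angle_zero_one_eq_arg {z : ℂ} (hz : 0 < z.im) : ∠ z 0 1 = arg z := by
  have hz0 : z ≠ 0 := fun h => by simp [h] at hz
  rw [EuclideanGeometry.angle, vsub_eq_sub, vsub_eq_sub, sub_zero, sub_zero,
    angle_one_right hz0, abs_of_nonneg (arg_nonneg_iff.2 hz.le)]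

theorem half_lt_norm_sub_half_iff (z : ℂ) : 1 / 2 < ‖z - 1 / 2‖ ↔ z.re < normSq z := by
  rw [← sq_lt_sq₀ (by norm_num) (norm_nonneg _), Complex.sq_norm, normSq_apply, normSq_apply]
  simp only [sub_re, sub_im, div_ofNat_re, div_ofNat_im, one_re, one_im]
  constructor <;> intro h <;> nlinarith

theorem triangle_zero_one_acute_iff (z : ℂ) :
    (∠ 0 z 1 < Real.pi / 2 ∧ ∠ z 0 1 < Real.pi / 2 ∧ ∠ z 1 0 < Real.pi / 2) ↔
      (0 < z.re ∧ z.re < 1 ∧ 1 / 2 < ‖z - 1 / 2‖) := by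
  simp only [EuclideanGeometry.angle, vsub_eq_sub,
    InnerProductGeometry.angle_lt_pi_div_two_iff_inner_pos, Complex.inner,
    half_lt_norm_sub_half_iff, normSq_apply, mul_re, conj_re, conj_im, sub_re, sub_im, one_re,
    one_im, zero_re, zero_im]
  constructor <;> rintro ⟨h1, h2, h3⟩ <;> refine ⟨?_, ?_, ?_⟩ <;> linarith

end Complex

/-- For the unit-area labelled triangle `T_z` with vertices `(2/Im z)^{1/2}·z`, `0`,
`(2/Im z)^{1/2}`, the angle at the `b`-vertex (at `0`) equals `arg z`, and `T_z` is acute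
iff `0 < Re z < 1` and `|z - 1/2| > 1/2`. -/
theorem angle_b_eq_arg_and_acute_iff (z : ℂ) (hz : 0 < z.im) :
    EuclideanGeometry.angle ((Real.sqrt (2 / z.im) : ℂ) * z) 0 (Real.sqrt (2 / z.im) : ℂ)
      = Complex.arg z ∧
    ((EuclideanGeometry.angle (0 : ℂ) ((Real.sqrt (2 / z.im) : ℂ) * z)
          (Real.sqrt (2 / z.im) : ℂ) < Real.pi / 2 ∧
      EuclideanGeometry.angle ((Real.sqrt (2 / z.im) : ℂ) * z) 0
          (Real.sqrt (2 / z.im) : ℂ) < Real.pi / 2 ∧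
      EuclideanGeometry.angle ((Real.sqrt (2 / z.im) : ℂ) * z)
          (Real.sqrt (2 / z.im) : ℂ) 0 < Real.pi / 2) ↔
      (0 < z.re ∧ z.re < 1 ∧ 1 / 2 < ‖z - 1 / 2‖)) := by
  set s : ℂ := (Real.sqrt (2 / z.im) : ℂ)
  have hs : s ≠ 0 := ofReal_ne_zero.2 (Real.sqrt_pos.2 (div_pos two_pos hz)).ne'
  have angle_at_zero : ∠ (s * z) 0 s = ∠ z 0 1 := by
    simpa using euclideanAngle_mul_left hs z 0 1
  have angle_at_z : ∠ 0 (s * z) s = ∠ 0 z 1 := by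
    simpa using euclideanAngle_mul_left hs 0 z 1
  have angle_at_one : ∠ (s * z) s 0 = ∠ z 1 0 := by
    simpa using euclideanAngle_mul_left hs z 1 0
  rw [angle_at_zero, angle_at_z, angle_at_one]
  exact ⟨angle_zero_one_eq_arg hz, triangle_zero_one_acute_iff z⟩
end

section
/- For a unit-area labelled triangle T_z parametrized by z ∈ ℍ, the angle at the a-vertex is π/2 if and only if |z - 1/2| = 1/2; the angle at the b-vertex is π/2 if and only if Re z = 0; and the angle at the c-vertex is π/2 if and only if Re z = 1. -/
open Complex EuclideanGeometry

/-! `T_z` is the image of the triangle `(z, 0, 1)` under the homothety `w ↦ √(2 / Im z) · w`,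
so it has the same angles. In the triangle `(z, 0, 1)` the angles at `0` and `1` are right
exactly when `z` lies on the perpendiculars to `[0, 1]` through `0` and `1`, and by Thales the
angle at `z` is right exactly when `z` lies on the circle with diameter `[0, 1]`. -/

lemma Complex.angle_ofReal_mul {r : ℝ} (hr : r ≠ 0) (a b c : ℂ) :
    ∠ (r * a) (r * b) (r * c) = ∠ a b c := by
  simpa [AffineMap.homothety_apply, Complex.real_smul] using angle_homothety (0 : ℂ) a b c hr

lemma Complex.angle_zero_self_one_eq_pi_div_two_iff (z : ℂ) :
    ∠ 0 z 1 = Real.pi / 2 ↔ ‖z - 1 / 2‖ = 1 / 2 := by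
  rw [Sphere.angle_eq_pi_div_two_iff_mem_sphere_ofDiameter, EuclideanGeometry.mem_sphere,
    Sphere.ofDiameter, dist_eq_norm, dist_zero_left, norm_one, midpoint_eq_smul_add]
  norm_num

lemma Complex.angle_self_zero_one_eq_pi_div_two_iff (z : ℂ) :
    ∠ z 0 1 = Real.pi / 2 ↔ z.re = 0 := by
  rw [angle, ← InnerProductGeometry.inner_eq_zero_iff_angle_eq_pi_div_two]
  simp [Complex.inner]

lemma Complex.angle_self_one_zero_eq_pi_div_two_iff (z : ℂ) :
    ∠ z 1 0 = Real.pi / 2 ↔ z.re = 1 := by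
  rw [angle, ← InnerProductGeometry.inner_eq_zero_iff_angle_eq_pi_div_two]
  simp only [vsub_eq_sub, zero_sub, inner_neg_right, Complex.inner, map_sub, map_one, one_mul,
    sub_re, conj_re, one_re, neg_sub]
  rw [sub_eq_zero, eq_comm]

/-- For the unit-area labelled triangle `T_z` with vertices `z_a = (2/Im z)^{1/2}·z`,
`z_b = 0`, `z_c = (2/Im z)^{1/2}`: the angle at the `a`-vertex is `π/2` iff
`|z - 1/2| = 1/2`, the angle at the `b`-vertex is `π/2` iff `Re z = 0`, and the angle at
the `c`-vertex is `π/2` iff `Re z = 1`. -/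
theorem right_angle_characterizations (z : ℂ) (hz : 0 < z.im) :
    (EuclideanGeometry.angle (0 : ℂ) ((Real.sqrt (2 / z.im) : ℂ) * z)
        (Real.sqrt (2 / z.im) : ℂ) = Real.pi / 2 ↔ ‖z - 1 / 2‖ = 1 / 2) ∧
    (EuclideanGeometry.angle ((Real.sqrt (2 / z.im) : ℂ) * z) 0
        (Real.sqrt (2 / z.im) : ℂ) = Real.pi / 2 ↔ z.re = 0) ∧
    (EuclideanGeometry.angle ((Real.sqrt (2 / z.im) : ℂ) * z)
        (Real.sqrt (2 / z.im) : ℂ) 0 = Real.pi / 2 ↔ z.re = 1) := by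
  have hs : Real.sqrt (2 / z.im) ≠ 0 := (Real.sqrt_pos.2 (by positivity)).ne'
  refine ⟨?_, ?_, ?_⟩
  · have h := angle_ofReal_mul hs 0 z 1
    rw [mul_zero, mul_one] at h
    rw [h, angle_zero_self_one_eq_pi_div_two_iff]
  · have h := angle_ofReal_mul hs z 0 1
    rw [mul_zero, mul_one] at h
    rw [h, angle_self_zero_one_eq_pi_div_two_iff]
  · have h := angle_ofReal_mul hs z 1 0
    rw [mul_zero, mul_one] at h
    rw [h, angle_self_one_zero_eq_pi_div_two_iff]
end

section
/- Any label-preserving and edge-preserving continuous map f from a triangle T to a triangle T' has Lipschitz constant at least h'/h, where h and h' are the lengths of the altitudes from the a-vertex of T and T' respectively. -/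
open Complex

/-- Any label-preserving, edge-preserving continuous map `f` from the triangle `ABC` to
the triangle `A'B'C'` has Lipschitz constant at least `h'/h`, where `h` (resp. `h'`) is
the length of the altitude from the `a`-vertex of `T` (resp. `T'`), i.e. the distance
from `A` (resp. `A'`) to the line through the opposite edge. Here the foot of the
altitude of `T` is assumed to lie on the opposite edge (as holds for acute triangles). -/
theorem lipschitz_lower_bound_altitude
    (A B C A' B' C' : ℂ)
    (f : ℂ → ℂ) (K : ℝ) (hK : 0 ≤ K)
    (hcont : ContinuousOn f (convexHull ℝ {A, B, C}))
    (hfA : f A = A') (hfB : f B = B') (hfC : f C = C')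
    (hea : f '' segment ℝ B C ⊆ segment ℝ B' C')
    (heb : f '' segment ℝ A C ⊆ segment ℝ A' C')
    (hec : f '' segment ℝ A B ⊆ segment ℝ A' B')
    (h h' : ℝ)
    (hh : h = Metric.infDist A (affineSpan ℝ ({B, C} : Set ℂ) : Set ℂ))
    (hh' : h' = Metric.infDist A' (affineSpan ℝ ({B', C'} : Set ℂ) : Set ℂ))
    (hhpos : 0 < h)
    (hfoot : ∃ p ∈ segment ℝ B C, dist A p = h)
    (hlip : ∀ x ∈ convexHull ℝ ({A, B, C} : Set ℂ),
      ∀ y ∈ convexHull ℝ ({A, B, C} : Set ℂ), dist (f x) (f y) ≤ K * dist x y) :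
    h' / h ≤ K := by
  obtain ⟨p, hp, hAp⟩ := hfoot
  have hAmem : A ∈ convexHull ℝ ({A, B, C} : Set ℂ) :=
    subset_convexHull ℝ _ (by simp)
  have hpmem : p ∈ convexHull ℝ ({A, B, C} : Set ℂ) := by
    have hseg : segment ℝ B C ⊆ convexHull ℝ ({A, B, C} : Set ℂ) := by
      apply (convex_convexHull ℝ _).segment_subset
      · exact subset_convexHull ℝ _ (by simp)
      · exact subset_convexHull ℝ _ (by simp)
    exact hseg hp
  have hfp : f p ∈ segment ℝ B' C' := hea ⟨p, hp, rfl⟩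
  have hfpspan : f p ∈ (affineSpan ℝ ({B', C'} : Set ℂ) : Set ℂ) := by
    have hconv : Convex ℝ (affineSpan ℝ ({B', C'} : Set ℂ) : Set ℂ) :=
      (affineSpan ℝ _).convex
    have hB' : B' ∈ (affineSpan ℝ ({B', C'} : Set ℂ) : Set ℂ) :=
      subset_affineSpan ℝ _ (by simp)
    have hC' : C' ∈ (affineSpan ℝ ({B', C'} : Set ℂ) : Set ℂ) :=
      subset_affineSpan ℝ _ (by simp)
    exact hconv.segment_subset hB' hC' hfp
  have h1 : h' ≤ dist A' (f p) := by
    rw [hh']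
    exact Metric.infDist_le_dist_of_mem hfpspan
  have h2 : dist A' (f p) ≤ K * h := by
    have := hlip A hAmem p hpmem
    rwa [hfA, hAp] at this
  rw [div_le_iff₀ hhpos]
  exact h1.trans h2
end

section
/- Let T be an acute unit-area triangle with z(T) = z₀ ∈ ℍ (0 < Re z₀ < 1, |z₀ - 1/2| > 1/2), and let T' be a right triangle whose parameter z₁ lies in the a-pencil of z₀ and on the geodesic Re z = 0 (right angle at the b-vertex). Then no label-preserving homeomorphism g: T → T' attains the infimal Lipschitz constant L(T,T'): every such homeomorphism satisfies L(g) > L(T,T'). -/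
/-!
The preimage under `g` of the base `[0, √(2 / Im z₁)]` of `T'` is a continuum in `T` joining the
base vertices (a continuous injection of a compact set is a closed embedding), so it contains a
point `x` on the altitude of `T` from its apex `A`. Then `|A - x| ≤ h₀`, the altitude of `T`.
On the other hand `g x ≠ 0` is a point of the base of `T'`, whose right angle sits at `0`, so
`|g A - g x| > h₁`. Hence every Lipschitz bound of `g` exceeds `h₁ / h₀ = √(Im z₁ / Im z₀)`,
and the least Lipschitz bound is itself a Lipschitz bound.
-/

open Complex

/-- The normalized unit-area triangle of a parameter `z ∈ ℍ`. -/
noncomputable def normTriangle (z : ℂ) : Set ℂ :=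
  convexHull ℝ {(Real.sqrt (2 / z.im) : ℂ) * z, 0, (Real.sqrt (2 / z.im) : ℂ)}

open Set

section LipschitzBounds

variable {α β : Type*} [PseudoMetricSpace α] [PseudoMetricSpace β]

def lipschitzBounds (f : α → β) (s : Set α) : Set ℝ :=
  {K | 0 ≤ K ∧ ∀ x ∈ s, ∀ y ∈ s, dist (f x) (f y) ≤ K * dist x y}

theorem isClosed_lipschitzBounds (f : α → β) (s : Set α) : IsClosed (lipschitzBounds f s) := by
  simp only [lipschitzBounds, ofPred_and, ofPred_forall]
  exact (isClosed_le continuous_const continuous_id).inter <|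
    isClosed_iInter fun x ↦ isClosed_iInter fun _ ↦ isClosed_iInter fun y ↦ isClosed_iInter fun _ ↦
      isClosed_le continuous_const (continuous_id.mul continuous_const)

theorem csInf_mem_lipschitzBounds {f : α → β} {s : Set α} (h : (lipschitzBounds f s).Nonempty) :
    sInf (lipschitzBounds f s) ∈ lipschitzBounds f s :=
  (isClosed_lipschitzBounds f s).csInf_mem h ⟨0, fun _ hK ↦ hK.1⟩

end LipschitzBounds

theorem IsPreconnected.inter_preimage_of_injOn {X Y : Type*} [TopologicalSpace X]
    [TopologicalSpace Y] [T2Space Y] {g : X → Y} {s : Set X} {C : Set Y} (hC : IsPreconnected C)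
    (hs : IsCompact s) (hg : ContinuousOn g s) (hinj : InjOn g s) (hCs : C ⊆ g '' s) :
    IsPreconnected (s ∩ g ⁻¹' C) := by
  have : CompactSpace s := isCompact_iff_compactSpace.mp hs
  have hpre := hC.preimage_of_isClosedMap hinj.injective hg.domRestrict.isClosedMap
    (by rwa [range_domRestrict])
  rw [← Subtype.image_preimage_coe]
  exact hpre.image _ continuous_subtype_val.continuousOn

theorem IsPreconnected.exists_mem_preimage_apply_eq {X Y : Type*} [TopologicalSpace X]
    [TopologicalSpace Y] [T2Space Y] {g : X → Y} {s : Set X} {C : Set Y} (hC : IsPreconnected C)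
    (hs : IsCompact s) (hg : ContinuousOn g s) (hinj : InjOn g s) (hCs : C ⊆ g '' s)
    {φ : X → ℝ} (hφ : Continuous φ) {u v : X} (hu : u ∈ s) (hv : v ∈ s) (hgu : g u ∈ C)
    (hgv : g v ∈ C) {p : ℝ} (hp : p ∈ Icc (φ u) (φ v)) : ∃ x ∈ s, g x ∈ C ∧ φ x = p := by
  obtain ⟨x, ⟨hx, hgx⟩, rfl⟩ :=
    ((hC.inter_preimage_of_injOn hs hg hinj hCs).image φ hφ.continuousOn).Icc_subset
      (mem_image_of_mem φ ⟨hu, hgu⟩) (mem_image_of_mem φ ⟨hv, hgv⟩) hp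
  exact ⟨x, hx, hgx, rfl⟩

theorem Complex.im_lt_dist_of_re_eq_zero {w v : ℂ} (hw : w.re = 0) (hv : v.im = 0) (hv₀ : v ≠ 0) :
    w.im < dist w v := by
  have hre : (w - v).re ≠ 0 := by
    rw [sub_re, hw, zero_sub, neg_ne_zero]
    exact fun h ↦ hv₀ (Complex.ext h hv)
  calc w.im ≤ |(w - v).im| := by rw [sub_im, hv, sub_zero]; exact le_abs_self _
    _ < dist w v := by rw [dist_eq]; exact abs_im_lt_norm.2 hre

namespace normTriangle

noncomputable def altitude (z : ℂ) : ℝ := Real.sqrt (2 / z.im) * z.im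

theorem altitude_eq {z : ℂ} (hz : 0 < z.im) : altitude z = Real.sqrt (2 * z.im) := by
  rw [altitude, show 2 * z.im = 2 / z.im * z.im ^ 2 by field_simp,
    Real.sqrt_mul (by positivity), Real.sqrt_sq hz.le]

theorem sqrt_im_div_im_eq_altitude_div {z₀ z₁ : ℂ} (h₀ : 0 < z₀.im) (h₁ : 0 < z₁.im) :
    Real.sqrt (z₁.im / z₀.im) = altitude z₁ / altitude z₀ := by
  rw [altitude_eq h₀, altitude_eq h₁, ← Real.sqrt_div' _ (by positivity)]
  congr 1
  field_simp

theorem im_apex (z : ℂ) : ((Real.sqrt (2 / z.im) : ℂ) * z).im = altitude z := by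
  simp [altitude]

theorem altitude_nonneg (z : ℂ) : 0 ≤ altitude z := by
  rcases le_total 0 z.im with h | h
  · exact mul_nonneg (Real.sqrt_nonneg _) h
  · rw [altitude, Real.sqrt_eq_zero_of_nonpos (div_nonpos_of_nonneg_of_nonpos zero_le_two h),
      zero_mul]

theorem altitude_pos {z : ℂ} (hz : 0 < z.im) : 0 < altitude z := by
  unfold altitude; positivity

theorem isCompact (z : ℂ) : IsCompact (normTriangle z) :=
  (toFinite _).isCompact_convexHull ℝ

theorem apex_mem (z : ℂ) : (Real.sqrt (2 / z.im) : ℂ) * z ∈ normTriangle z :=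
  subset_convexHull ℝ _ (mem_insert _ _)

theorem zero_mem (z : ℂ) : 0 ∈ normTriangle z :=
  subset_convexHull ℝ _ (mem_insert_of_mem _ (mem_insert _ _))

theorem ofReal_mem (z : ℂ) : (Real.sqrt (2 / z.im) : ℂ) ∈ normTriangle z :=
  subset_convexHull ℝ _ (mem_insert_of_mem _ (mem_insert_of_mem _ rfl))

theorem ofReal_image_Icc_subset (z : ℂ) :
    ofReal '' Icc 0 (Real.sqrt (2 / z.im)) ⊆ normTriangle z := by
  have h := image_segment ℝ ofRealCLM.toLinearMap.toAffineMap 0 (Real.sqrt (2 / z.im))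
  rw [segment_eq_Icc (by positivity)] at h
  calc ofReal '' Icc 0 (Real.sqrt (2 / z.im)) = segment ℝ 0 (Real.sqrt (2 / z.im) : ℂ) := by
        simpa using h
    _ ⊆ normTriangle z := (convex_convexHull ℝ _).segment_subset (zero_mem z) (ofReal_mem z)

theorem im_mem_Icc {z w : ℂ} (hw : w ∈ normTriangle z) : w.im ∈ Icc 0 (altitude z) := by
  refine convexHull_min ?_ ((convex_halfSpace_im_ge 0).inter (convex_halfSpace_im_le _)) hw
  rintro _ (rfl | rfl | rfl)
    <;> simp only [mem_inter_iff, mem_ofPred_eq, im_apex, zero_im, ofReal_im, le_refl,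
      altitude_nonneg, and_self]

theorem dist_apex_le_altitude {z w : ℂ} (hw : w ∈ normTriangle z)
    (hre : w.re = ((Real.sqrt (2 / z.im) : ℂ) * z).re) :
    dist ((Real.sqrt (2 / z.im) : ℂ) * z) w ≤ altitude z := by
  obtain ⟨h0, hh⟩ := im_mem_Icc hw
  rw [dist_of_re_eq hre.symm, Real.dist_eq, abs_le, im_apex]
  constructor <;> linarith

end normTriangle

open normTriangle in
theorem no_extremal_homeomorphism_general
    (z₀ z₁ : ℂ) (h₀ : 0 < z₀.im) (h₁ : 0 < z₁.im)
    (hacute : 0 < z₀.re ∧ z₀.re < 1 ∧ 1 / 2 < ‖z₀ - 1 / 2‖)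
    (hright : z₁.re = 0)
    (g : ℂ → ℂ)
    (hcont : ContinuousOn g (normTriangle z₀))
    (hbij : Set.BijOn g (normTriangle z₀) (normTriangle z₁))
    (hga : g ((Real.sqrt (2 / z₀.im) : ℂ) * z₀) = (Real.sqrt (2 / z₁.im) : ℂ) * z₁)
    (hgb : g 0 = 0)
    (hgc : g (Real.sqrt (2 / z₀.im) : ℂ) = (Real.sqrt (2 / z₁.im) : ℂ))
    (hLip : ∃ K : ℝ, 0 ≤ K ∧ ∀ x ∈ normTriangle z₀, ∀ y ∈ normTriangle z₀,
      dist (g x) (g y) ≤ K * dist x y) :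
    Real.sqrt (z₁.im / z₀.im) <
      sInf {K : ℝ | 0 ≤ K ∧ ∀ x ∈ normTriangle z₀, ∀ y ∈ normTriangle z₀,
        dist (g x) (g y) ≤ K * dist x y} := by
  obtain ⟨hre₀, hre₁, -⟩ := hacute
  set s₀ := Real.sqrt (2 / z₀.im)
  set s₁ := Real.sqrt (2 / z₁.im)
  have hs₀ : 0 < s₀ := by positivity
  obtain ⟨x, hx, ⟨r, -, hgx⟩, hxre⟩ :=
    (isPreconnected_Icc.image _ continuous_ofReal.continuousOn).exists_mem_preimage_apply_eq
      (isCompact z₀) hcont hbij.injOn (hbij.image_eq ▸ ofReal_image_Icc_subset z₁) continuous_re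
      (zero_mem z₀) (ofReal_mem z₀) ⟨0, left_mem_Icc.2 (by positivity), by rw [hgb, ofReal_zero]⟩
      ⟨s₁, right_mem_Icc.2 (by positivity), hgc.symm⟩ (p := s₀ * z₀.re)
      ⟨by rw [zero_re]; positivity, by rw [ofReal_re]; exact mul_le_of_le_one_right hs₀.le hre₁.le⟩
  have hx₀ : x ≠ 0 := by
    rintro rfl
    exact (mul_pos hs₀ hre₀).ne (zero_re ▸ hxre)
  have hgx₀ : g x ≠ 0 := fun h ↦ hx₀ (hbij.injOn hx (zero_mem z₀) (h.trans hgb.symm))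
  obtain ⟨hK, hKlip⟩ := csInf_mem_lipschitzBounds (f := g) (s := normTriangle z₀) hLip
  change _ < sInf (lipschitzBounds g (normTriangle z₀))
  rw [sqrt_im_div_im_eq_altitude_div h₀ h₁, div_lt_iff₀ (altitude_pos h₀)]
  calc altitude z₁ = ((s₁ : ℂ) * z₁).im := (im_apex z₁).symm
    _ < dist (g (s₀ * z₀)) (g x) := by
      rw [hga]
      exact im_lt_dist_of_re_eq_zero (by rw [re_ofReal_mul, hright, mul_zero])
        (by rw [← hgx, ofReal_im]) hgx₀
    _ ≤ _ * dist (s₀ * z₀) x := hKlip _ (apex_mem z₀) _ hx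
    _ ≤ _ * altitude z₀ := by gcongr; exact dist_apex_le_altitude hx (by rw [re_ofReal_mul, hxre])

/-- Let `T_{z₀}` be acute and let `z₁` lie in the `a`-pencil of `z₀` with `Re z₁ = 0`
(right angle at the `b`-vertex). Then no label-preserving Lipschitz homeomorphism
`g : T_{z₀} → T_{z₁}` attains the infimal Lipschitz constant
`L(T_{z₀},T_{z₁}) = √(Im z₁/Im z₀)`: the Lipschitz constant of every such `g` (the
least Lipschitz bound for `g`) is strictly greater than `√(Im z₁/Im z₀)`. -/
theorem no_extremal_homeomorphism
    (z₀ z₁ : ℂ) (h₀ : 0 < z₀.im) (h₁ : 0 < z₁.im)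
    (hacute : 0 < z₀.re ∧ z₀.re < 1 ∧ 1 / 2 < ‖z₀ - 1 / 2‖)
    (hright : z₁.re = 0)
    (hpen₁ : z₀.im * z₁.re ≤ z₁.im * z₀.re)
    (hpen₂ : z₀.im * (1 - z₁.re) ≤ z₁.im * (1 - z₀.re))
    (g : ℂ → ℂ)
    (hcont : ContinuousOn g (normTriangle z₀))
    (hbij : Set.BijOn g (normTriangle z₀) (normTriangle z₁))
    (hga : g ((Real.sqrt (2 / z₀.im) : ℂ) * z₀) = (Real.sqrt (2 / z₁.im) : ℂ) * z₁)
    (hgb : g 0 = 0)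
    (hgc : g (Real.sqrt (2 / z₀.im) : ℂ) = (Real.sqrt (2 / z₁.im) : ℂ))
    (hLip : ∃ K : ℝ, 0 ≤ K ∧ ∀ x ∈ normTriangle z₀, ∀ y ∈ normTriangle z₀,
      dist (g x) (g y) ≤ K * dist x y) :
    Real.sqrt (z₁.im / z₀.im) <
      sInf {K : ℝ | 0 ≤ K ∧ ∀ x ∈ normTriangle z₀, ∀ y ∈ normTriangle z₀,
        dist (g x) (g y) ≤ K * dist x y} :=
  no_extremal_homeomorphism_general z₀ z₁ h₀ h₁ hacute hright g hcont hbij hga hgb hgc hLip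
end

section
/- Let z₀ ∈ ℍ with θ₁ = arg(z₀) and write v = ξe^{iθ} with ξ > 0 and θ₁ + arg(z₀-1) - 2π ≤ θ ≤ θ₁ - π. Then Im(v)/Im(z₀) - 2Re(v/z₀) = ξ·sin(θ - 2θ₁)/Im(z₀) > 0, provided sin(arg(z₀-1) - θ₁) > 0 and sin(π - θ₁) > 0. -/
open Complex Real

/-! Writing `z₀ = ‖z₀‖ e^{iθ₁}` and `v = ξ e^{iθ}` gives `Re(v/z₀) = ξ cos(θ - θ₁)/‖z₀‖` and
`Im z₀ = ‖z₀‖ sin θ₁`, so the expression is `ξ (sin θ - 2 sin θ₁ cos(θ - θ₁))/Im z₀`, and the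
product-to-sum formula turns the numerator into `ξ sin(θ - 2θ₁)`. On the sector, `θ - 2θ₁ + 2π`
lies in `[θ₂ - θ₁, π - θ₁] ⊆ (0, π)`, because `0 < θ₁ < θ₂`. -/

lemma Real.sin_sub_two_mul_sin_mul_cos_sub (a b : ℝ) :
    sin a - 2 * sin b * cos (a - b) = sin (a - 2 * b) := by
  have h₁ := sin_add (a - b) b
  have h₂ := sin_sub (a - b) b
  rw [sub_add_cancel] at h₁
  rw [sub_sub, ← two_mul] at h₂
  linarith

lemma Real.sin_sub_two_mul_pos {θ₁ θ₂ θ : ℝ} (h₁ : 0 < θ₁) (h₁₂ : θ₁ < θ₂)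
    (hlow : θ₁ + θ₂ - 2 * π ≤ θ) (hhigh : θ ≤ θ₁ - π) : 0 < sin (θ - 2 * θ₁) := by
  rw [← sin_add_two_pi]
  exact sin_pos_of_pos_of_lt_pi (by linarith) (by linarith)

namespace Complex

lemma arg_pos_of_im_pos {z : ℂ} (hz : 0 < z.im) : 0 < arg z :=
  (arg_nonneg_iff.2 hz.le).lt_of_ne fun h ↦ hz.ne' (arg_eq_zero_iff.1 h.symm).2

lemma arg_lt_arg_sub_one_of_sin_pos {z : ℂ} (hz : 0 < z.im)
    (hsin : 0 < Real.sin (arg (z - 1) - arg z)) : arg z < arg (z - 1) := by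
  have h₀ : 0 ≤ arg (z - 1) := arg_nonneg_iff.2 (by simpa using hz.le)
  by_contra! h
  exact (Real.sin_nonpos_of_nonpos_of_neg_pi_le (by linarith) (by linarith [arg_le_pi z])).not_gt
    hsin

lemma re_ofReal_mul_exp_div (ξ θ : ℝ) (z : ℂ) :
    ((ξ : ℂ) * exp (θ * I) / z).re = ξ * Real.cos (θ - arg z) / ‖z‖ := by
  rcases eq_or_ne z 0 with rfl | hz
  · simp
  have hquot : (ξ : ℂ) * exp (θ * I) / z = ((ξ / ‖z‖ : ℝ) : ℂ) * exp ((θ - arg z : ℝ) * I) := by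
    conv_lhs => rw [← norm_mul_exp_arg_mul_I z]
    rw [ofReal_sub, sub_mul, exp_sub, ofReal_div]
    field_simp
  rw [hquot, re_ofReal_mul, exp_ofReal_mul_I_re, div_mul_eq_mul_div]

lemma im_div_im_sub_two_mul_re_div (ξ θ : ℝ) {z : ℂ} (hz : z.im ≠ 0) :
    ((ξ : ℂ) * exp (θ * I)).im / z.im - 2 * ((ξ : ℂ) * exp (θ * I) / z).re =
      ξ * Real.sin (θ - 2 * arg z) / z.im := by
  have him := (norm_mul_sin_arg z).symm
  have hsin : Real.sin (arg z) ≠ 0 := right_ne_zero_of_mul (him ▸ hz)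
  rw [re_ofReal_mul_exp_div ξ θ z, im_ofReal_mul, exp_ofReal_mul_I_im,
    ← Real.sin_sub_two_mul_sin_mul_cos_sub θ (arg z), him]
  field_simp

end Complex

theorem b_branch_positive_general
    (z₀ : ℂ) (hz₀ : 0 < z₀.im)
    (θ₁ θ₂ : ℝ) (hθ₁ : θ₁ = Complex.arg z₀) (hθ₂ : θ₂ = Complex.arg (z₀ - 1))
    (ξ θ : ℝ) (hξ : 0 < ξ)
    (hθlow : θ₁ + θ₂ - 2 * Real.pi ≤ θ) (hθhigh : θ ≤ θ₁ - Real.pi)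
    (v : ℂ) (hv : v = (ξ : ℂ) * Complex.exp ((θ : ℂ) * Complex.I))
    (hsin₁ : 0 < Real.sin (θ₂ - θ₁)) :
    v.im / z₀.im - 2 * (v / z₀).re = ξ * Real.sin (θ - 2 * θ₁) / z₀.im ∧
      0 < v.im / z₀.im - 2 * (v / z₀).re := by
  subst hθ₁ hθ₂ hv
  have hformula := im_div_im_sub_two_mul_re_div ξ θ hz₀.ne'
  have hsin := Real.sin_sub_two_mul_pos (arg_pos_of_im_pos hz₀)
    (arg_lt_arg_sub_one_of_sin_pos hz₀ hsin₁) hθlow hθhigh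
  exact ⟨hformula, hformula ▸ by positivity⟩

/-- Positivity of the `b`-branch of the Finsler norm on the sector `S_b(z₀)`: with
`θ₁ = arg z₀`, `θ₂ = arg(z₀-1)`, `v = ξ e^{iθ}` where `ξ > 0` and
`θ₁ + θ₂ - 2π ≤ θ ≤ θ₁ - π`, we have
`Im v/Im z₀ - 2 Re(v/z₀) = ξ sin(θ - 2θ₁)/Im z₀ > 0`, provided `sin(θ₂-θ₁) > 0` and
`sin(π-θ₁) > 0`. -/
theorem b_branch_positive
    (z₀ : ℂ) (hz₀ : 0 < z₀.im)
    (θ₁ θ₂ : ℝ) (hθ₁ : θ₁ = Complex.arg z₀) (hθ₂ : θ₂ = Complex.arg (z₀ - 1))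
    (ξ θ : ℝ) (hξ : 0 < ξ)
    (hθlow : θ₁ + θ₂ - 2 * Real.pi ≤ θ) (hθhigh : θ ≤ θ₁ - Real.pi)
    (v : ℂ) (hv : v = (ξ : ℂ) * Complex.exp ((θ : ℂ) * Complex.I))
    (hsin₁ : 0 < Real.sin (θ₂ - θ₁)) (hsin₂ : 0 < Real.sin (Real.pi - θ₁)) :
    v.im / z₀.im - 2 * (v / z₀).re = ξ * Real.sin (θ - 2 * θ₁) / z₀.im ∧
      0 < v.im / z₀.im - 2 * (v / z₀).re :=
  b_branch_positive_general z₀ hz₀ θ₁ θ₂ hθ₁ hθ₂ ξ θ hξ hθlow hθhigh v hv hsin₁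
end
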